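/- Let W be a matrix weight on I₀ and let (Ã_J)_{J∈𝒟} be positive semidefinite symmetric d×d matrices satisfying (1/|I|) Σ_{J∈𝒟(I)} Ã_J ≤ ⟨W⟩_I (as quadratic forms) for every I ∈ 𝒟. Fix n ≥ 0 and s ≥ 0, set W_n = Σ_{I∈𝒟^n} ⟨W⟩_I 1_I and W_{n,s} = W_n + s Σ_{I∈𝒟₊^{≤n}} |S_I|^{-1} 1_{S_I} Ã_I, where S_I is the leftmost dyadic interval of length 2^{-n-1} contained in I. Then for every I ∈ 𝒟₊^{≤n}: ⟨W_{n,s}⟩_I = ⟨W⟩_I + (s/|I|) Σ_{J∈𝒟₊^{≤n}, J⊆I} Ã_J ≤ (1+s) ⟨W⟩_I as quadratic forms. -/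

import Mathlib

open MeasureTheory Set
open scoped ENNReal Matrix Pointwise Classical

noncomputable section

/-- The unit interval `I₀ = [0,1)`. -/
def I0 : Set ℝ := Set.Ico (0 : ℝ) 1

/-- The dyadic interval `[k/2^n, (k+1)/2^n)`. -/
def dyad (n k : ℕ) : Set ℝ := Set.Ico ((k : ℝ) / 2 ^ n) (((k : ℝ) + 1) / 2 ^ n)

/-- Real `d × d` matrices. -/
abbrev Mat (d : ℕ) := Matrix (Fin d) (Fin d) ℝ

/-- The Euclidean norm `|v|_{ℝ^d}`. -/
def enorm2 {d : ℕ} (v : Fin d → ℝ) : ℝ := Real.sqrt (∑ i, v i ^ 2)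

/-- The Euclidean inner product `⟨v, w⟩_{ℝ^d}`. -/
def dotp {d : ℕ} (v w : Fin d → ℝ) : ℝ := ∑ i, v i * w i

open scoped Classical in
/-- The positive semidefinite square root of a positive semidefinite matrix
(junk value `0` if the matrix is not positive semidefinite). -/
def matSqrt {d : ℕ} (A : Mat d) : Mat d := if h : A.PosSemidef then
    h.1.eigenvectorUnitary.1 * Matrix.diagonal (Real.sqrt ∘ h.1.eigenvalues) *
      (star h.1.eigenvectorUnitary : Mat d) else 0

/-- Order in the sense of quadratic forms: `A ⩽ B` iff `B - A` is positive semidefinite. -/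
def matLE {d : ℕ} (A B : Mat d) : Prop := (B - A).PosSemidef

/-- The average `⟨g⟩_I = |I|⁻¹ ∫_I g` of a (scalar- or vector-valued) function. -/
def avgOn {E : Type*} [NormedAddCommGroup E] [NormedSpace ℝ E] (I : Set ℝ) (g : ℝ → E) : E :=
  (volume I).toReal⁻¹ • ∫ x in I, g x

/-- The entrywise average `⟨W⟩_I` of a matrix-valued function. -/
def avgMat {d : ℕ} (I : Set ℝ) (W : ℝ → Mat d) : Mat d :=
  Matrix.of fun i j => avgOn I fun x => W x i j

/-- A matrix weight on `I₀`: an integrable function with symmetric values,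
positive definite a.e. on `I₀`. -/
structure IsMatrixWeight (d : ℕ) (W : ℝ → Mat d) : Prop where
  intOn : ∀ i j, IntegrableOn (fun x => W x i j) I0
  symm : ∀ x, (W x).IsSymm
  posdef : ∀ᵐ x ∂(volume.restrict I0), (W x).PosDef

/-- Membership in `L²_W(ℝ^d)`. -/
def MemL2W {d : ℕ} (W : ℝ → Mat d) (f : ℝ → Fin d → ℝ) : Prop :=
  Measurable f ∧ IntegrableOn (fun x => dotp (W x *ᵥ f x) (f x)) I0

/-- The squared norm `‖f‖²_{L²_W} = ∫_{I₀} ⟨W(x) f(x), f(x)⟩ dx`. -/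
def l2normSq {d : ℕ} (W : ℝ → Mat d) (f : ℝ → Fin d → ℝ) : ℝ :=
  ∫ x in I0, dotp (W x *ᵥ f x) (f x)

/-- The average `⟨φ W f⟩_I = |I|⁻¹ ∫_I φ(y) W(y) f(y) dy`. -/
def avgPhiWf {d : ℕ} (I : Set ℝ) (φ : ℝ → ℝ) (W : ℝ → Mat d) (f : ℝ → Fin d → ℝ) :
    Fin d → ℝ :=
  avgOn I fun y => φ y • (W y *ᵥ f y)

/-- Admissible functions `φ : I → [-1,1]`, measurable. -/
def Adm (I : Set ℝ) (φ : ℝ → ℝ) : Prop :=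
  Measurable φ ∧ ∀ y ∈ I, φ y ∈ Set.Icc (-1 : ℝ) 1

/-- The martingale weight at time `n`: `W_n = Σ_{I∈𝒟^n} ⟨W⟩_I 1_I`. -/
def Wmart {d : ℕ} (W : ℝ → Mat d) (n : ℕ) (x : ℝ) : Mat d :=
  ∑ k ∈ Finset.range (2 ^ n), if x ∈ dyad n k then avgMat (dyad n k) W else 0

/-- The index set of `𝒟₊^{≤n}`: pairs `(m,k)` with `1 ≤ m ≤ n`, `k < 2^m`, `k` odd,
corresponding to the dyadic intervals in `𝒟₊` of length at least `2^{-n}`. -/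
def DplusLe (n : ℕ) : Finset (ℕ × ℕ) :=
  (Finset.Icc 1 n ×ˢ Finset.range (2 ^ n)).filter fun p => p.2 < 2 ^ p.1 ∧ p.2 % 2 = 1

/-- For `I = dyad m k`, the leftmost dyadic interval of length `2^{-(n+1)}`
contained in `I`: `S_I = dyad (n+1) (k·2^{n+1-m})`. -/
def SIdx (n : ℕ) (p : ℕ × ℕ) : Set ℝ := dyad (n + 1) (p.2 * 2 ^ (n + 1 - p.1))

/-- The perturbed weight `W_{n,s} = W_n + s Σ_{I∈𝒟₊^{≤n}} |S_I|⁻¹ 1_{S_I} Ã_I`. -/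
def Wns {d : ℕ} (W : ℝ → Mat d) (Atil : ℕ × ℕ → Mat d) (n : ℕ) (s : ℝ) (x : ℝ) : Mat d :=
  Wmart W n x +
    s • ∑ p ∈ DplusLe n,
      if x ∈ SIdx n p then ((volume (SIdx n p)).toReal)⁻¹ • Atil p else 0


/-!
For `I = dyad m k` with `m ≤ n`, the interval `I` is a union of intervals of `𝒟^n`, on each of
which `W_n` is constant equal to the average of `W`; hence `W_n` and `W` have the same average
over `I`. The bump `|S_J|⁻¹ 1_{S_J} Ã_J` integrates over `I` to `Ã_J` if `S_J ⊆ I` and to `0`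
otherwise, and since `I` is a right half (`k` odd), `S_J ⊆ I` exactly when `J ⊆ I`. The
inequality is then the Carleson condition on `I`, read on the finitely many `J ∈ 𝒟₊^{≤n}`
contained in `I`.
-/

lemma mem_dyad_iff {n k : ℕ} {x : ℝ} : x ∈ dyad n k ↔ 0 ≤ x ∧ ⌊x * 2 ^ n⌋₊ = k := by
  have h2 : (0 : ℝ) < 2 ^ n := by positivity
  rw [dyad, mem_Ico, div_le_iff₀ h2, lt_div_iff₀ h2]
  constructor
  · rintro ⟨hk, hk1⟩
    have hx : 0 ≤ x * 2 ^ n := (Nat.cast_nonneg k).trans hk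
    exact ⟨nonneg_of_mul_nonneg_left hx h2, (Nat.floor_eq_iff hx).2 ⟨hk, hk1⟩⟩
  · rintro ⟨hx, rfl⟩
    exact (Nat.floor_eq_iff (mul_nonneg hx h2.le)).1 rfl

lemma measurableSet_dyad (n k : ℕ) : MeasurableSet (dyad n k) := measurableSet_Ico

lemma volume_dyad_toReal (n k : ℕ) : (volume (dyad n k)).toReal = (2 ^ n : ℝ)⁻¹ := by
  rw [dyad, Real.volume_Ico, show ((k : ℝ) + 1) / 2 ^ n - k / 2 ^ n = (2 ^ n)⁻¹ by ring,
    ENNReal.toReal_ofReal (by positivity)]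

lemma volume_dyad_ne_top (n k : ℕ) : volume (dyad n k) ≠ ⊤ := by
  simp [dyad, Real.volume_Ico]

lemma dyad_nonempty (n k : ℕ) : (dyad n k).Nonempty :=
  ⟨k / 2 ^ n, left_mem_Ico.2 (by gcongr; linarith)⟩

lemma dyad_subset_I0 {n k : ℕ} (hk : k < 2 ^ n) : dyad n k ⊆ I0 := by
  have hk' : (k : ℝ) + 1 ≤ 2 ^ n := by exact_mod_cast hk
  refine Ico_subset_Ico (by positivity) ?_
  rwa [div_le_one (by positivity)]

lemma mem_dyad_div {m m' k : ℕ} {x : ℝ} (h : m ≤ m') (hx : x ∈ dyad m' k) :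
    x ∈ dyad m (k / 2 ^ (m' - m)) := by
  rw [mem_dyad_iff] at hx ⊢
  refine ⟨hx.1, ?_⟩
  have hpow : (2 : ℝ) ^ m = 2 ^ m' / ((2 ^ (m' - m) : ℕ) : ℝ) := by
    rw [eq_div_iff (by positivity)]
    push_cast
    rw [← pow_add, Nat.add_sub_cancel' h]
  rw [hpow, ← mul_div_assoc, Nat.floor_div_natCast, hx.2]

lemma dyad_subset_dyad_iff {m m' k k' : ℕ} (h : m ≤ m') :
    dyad m' k' ⊆ dyad m k ↔ k' / 2 ^ (m' - m) = k := by
  constructor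
  · intro hsub
    obtain ⟨x, hx⟩ := dyad_nonempty m' k'
    exact ((mem_dyad_iff.1 (mem_dyad_div h hx)).2).symm.trans (mem_dyad_iff.1 (hsub hx)).2
  · rintro rfl x hx
    exact mem_dyad_div h hx

lemma dyad_subset_or_disjoint {m m' k k' : ℕ} (h : m ≤ m') :
    dyad m' k' ⊆ dyad m k ∨ Disjoint (dyad m' k') (dyad m k) := by
  refine or_iff_not_imp_right.2 fun hnd => (dyad_subset_dyad_iff h).2 ?_
  obtain ⟨x, hx', hx⟩ := not_disjoint_iff.1 hnd
  exact ((mem_dyad_iff.1 (mem_dyad_div h hx')).2).symm.trans (mem_dyad_iff.1 hx).2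

lemma pairwise_disjoint_dyad (n : ℕ) : Pairwise (Function.onFun Disjoint (dyad n)) := by
  intro k k' hne
  refine disjoint_left.2 fun x hx hx' => hne ?_
  exact (mem_dyad_iff.1 hx).2.symm.trans (mem_dyad_iff.1 hx').2

lemma biUnion_range_dyad (n : ℕ) : ⋃ l ∈ Finset.range (2 ^ n), dyad n l = I0 := by
  refine subset_antisymm (iUnion₂_subset fun l hl => dyad_subset_I0 (Finset.mem_range.1 hl)) ?_
  rintro x ⟨hx0, hx1⟩
  refine mem_iUnion₂.2 ⟨⌊x * 2 ^ n⌋₊, Finset.mem_range.2 ?_, mem_dyad_iff.2 ⟨hx0, rfl⟩⟩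
  rw [Nat.floor_lt (by positivity)]
  push_cast
  nlinarith [pow_pos (two_pos : (0 : ℝ) < 2) n]

lemma SIdx_subset_dyad {n : ℕ} {p : ℕ × ℕ} (hp : p.1 ≤ n) : SIdx n p ⊆ dyad p.1 p.2 :=
  (dyad_subset_dyad_iff (by omega)).2 (Nat.mul_div_cancel _ (by positivity))

/-- As `k` is odd, `dyad m k` contains the left endpoint of no strictly larger dyadic interval. -/
lemma SIdx_subset_dyad_iff {n m k : ℕ} {p : ℕ × ℕ} (hpn : p.1 ≤ n) (hmn : m ≤ n)
    (hodd : k % 2 = 1) : SIdx n p ⊆ dyad m k ↔ dyad p.1 p.2 ⊆ dyad m k := by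
  refine ⟨fun hsub => ?_, (SIdx_subset_dyad hpn).trans⟩
  rw [SIdx, dyad_subset_dyad_iff (by omega)] at hsub
  rcases le_or_gt m p.1 with hmp | hpm
  · rw [dyad_subset_dyad_iff hmp, ← hsub, show n + 1 - m = (p.1 - m) + (n + 1 - p.1) by omega,
      pow_add, Nat.mul_div_mul_right _ _ (by positivity)]
  · rw [show n + 1 - p.1 = (m - p.1 - 1 + 1) + (n + 1 - m) by omega, pow_add,
      ← mul_assoc, Nat.mul_div_cancel _ (by positivity), pow_succ, ← mul_assoc] at hsub
    omega

lemma mem_DplusLe {n : ℕ} {p : ℕ × ℕ} :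
    p ∈ DplusLe n ↔ (1 ≤ p.1 ∧ p.1 ≤ n) ∧ p.2 < 2 ^ n ∧ p.2 < 2 ^ p.1 ∧ p.2 % 2 = 1 := by
  simp [DplusLe, and_assoc]

lemma setIntegral_eq_sum_inter_dyad {E : Type*} [NormedAddCommGroup E] [NormedSpace ℝ E]
    {f : ℝ → E} {I : Set ℝ} (hIm : MeasurableSet I) (hI : I ⊆ I0) (hf : IntegrableOn f I)
    (n : ℕ) : ∫ x in I, f x = ∑ l ∈ Finset.range (2 ^ n), ∫ x in I ∩ dyad n l, f x := by
  have hcover : I = ⋃ l ∈ Finset.range (2 ^ n), I ∩ dyad n l := by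
    rw [← inter_iUnion₂, biUnion_range_dyad, inter_eq_left.2 hI]
  conv_lhs => rw [hcover]
  exact integral_biUnion_finset _ (fun l _ => hIm.inter (measurableSet_dyad n l))
    (fun l _ l' _ hne => (pairwise_disjoint_dyad n hne).mono inter_subset_right inter_subset_right)
    (fun l _ => hf.mono_set inter_subset_left)

section MatrixWeight

variable {d : ℕ}

lemma volume_mul_avgMat_apply {W : ℝ → Mat d} {J : Set ℝ} (hJ : (volume J).toReal ≠ 0)
    (i j : Fin d) : (volume J).toReal * avgMat J W i j = ∫ x in J, W x i j := by
  rw [avgMat, Matrix.of_apply, avgOn, smul_eq_mul, mul_inv_cancel_left₀ hJ]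

lemma Wmart_apply (W : ℝ → Mat d) (n : ℕ) (x : ℝ) (i j : Fin d) :
    Wmart W n x i j =
      ∑ l ∈ Finset.range (2 ^ n), (dyad n l).indicator (fun _ => avgMat (dyad n l) W i j) x := by
  simp only [Wmart, Matrix.sum_apply, indicator_apply]
  refine Finset.sum_congr rfl fun l _ => ?_
  split_ifs <;> rfl

lemma integrableOn_Wmart_apply {W : ℝ → Mat d} {J : Set ℝ} (hJ : volume J ≠ ⊤) (n : ℕ)
    (i j : Fin d) : IntegrableOn (fun x => Wmart W n x i j) J := by
  simp_rw [Wmart_apply]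
  exact integrable_finsetSum _ fun l _ =>
    (integrableOn_const hJ).indicator (measurableSet_dyad n l)

lemma setIntegral_Wmart_apply {W : ℝ → Mat d} (hW : ∀ i j, IntegrableOn (fun x => W x i j) I0)
    {m n k : ℕ} (hmn : m ≤ n) (hk : k < 2 ^ m) (i j : Fin d) :
    ∫ x in dyad m k, Wmart W n x i j = ∫ x in dyad m k, W x i j := by
  have hI := dyad_subset_I0 hk
  have hind : ∀ l ∈ Finset.range (2 ^ n), IntegrableOn
      (fun x => (dyad n l).indicator (fun _ => avgMat (dyad n l) W i j) x) (dyad m k) :=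
    fun l _ => (integrableOn_const (volume_dyad_ne_top m k)).indicator (measurableSet_dyad n l)
  simp_rw [Wmart_apply]
  rw [integral_finsetSum _ hind,
    setIntegral_eq_sum_inter_dyad (measurableSet_dyad m k) hI ((hW i j).mono_set hI) n]
  refine Finset.sum_congr rfl fun l _ => ?_
  rw [setIntegral_indicator (measurableSet_dyad n l), setIntegral_const, smul_eq_mul]
  rcases dyad_subset_or_disjoint (k := k) (k' := l) hmn with hsub | hdisj
  · rw [inter_eq_right.2 hsub, measureReal_def,
      volume_mul_avgMat_apply (by rw [volume_dyad_toReal]; positivity)]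
  · rw [hdisj.symm.inter_eq, measureReal_empty, zero_mul, setIntegral_empty]

lemma Wns_apply (W : ℝ → Mat d) (Atil : ℕ × ℕ → Mat d) (n : ℕ) (s x : ℝ) (i j : Fin d) :
    Wns W Atil n s x i j = Wmart W n x i j + s * ∑ p ∈ DplusLe n,
      (SIdx n p).indicator (fun _ => (volume (SIdx n p)).toReal⁻¹ * Atil p i j) x := by
  simp only [Wns, Matrix.add_apply, Matrix.smul_apply, Matrix.sum_apply, smul_eq_mul,
    indicator_apply]
  congr 2
  refine Finset.sum_congr rfl fun p _ => ?_
  split_ifs <;> rfl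

lemma setIntegral_indicator_SIdx {n m k : ℕ} {p : ℕ × ℕ} (hpn : p.1 ≤ n) (hmn : m ≤ n)
    (hodd : k % 2 = 1) (a : ℝ) :
    ∫ x in dyad m k, (SIdx n p).indicator (fun _ => (volume (SIdx n p)).toReal⁻¹ * a) x =
      if dyad p.1 p.2 ⊆ dyad m k then a else 0 := by
  have hS : MeasurableSet (SIdx n p) := measurableSet_dyad _ _
  rw [setIntegral_indicator hS, setIntegral_const, smul_eq_mul,
    ← SIdx_subset_dyad_iff hpn hmn hodd]
  rcases dyad_subset_or_disjoint (m := m) (m' := n + 1) (k := k)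
    (k' := p.2 * 2 ^ (n + 1 - p.1)) (by omega) with hsub | hdisj
  · change SIdx n p ⊆ dyad m k at hsub
    rw [if_pos hsub, inter_eq_right.2 hsub, measureReal_def,
      mul_inv_cancel_left₀ (by rw [SIdx, volume_dyad_toReal]; positivity)]
  · change Disjoint (SIdx n p) (dyad m k) at hdisj
    rw [if_neg fun hsub => (dyad_nonempty _ _).ne_empty (hdisj.eq_bot_of_le hsub),
      hdisj.symm.inter_eq, measureReal_empty, zero_mul]

lemma setIntegral_Wns_apply {W : ℝ → Mat d} (hW : ∀ i j, IntegrableOn (fun x => W x i j) I0)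
    (Atil : ℕ × ℕ → Mat d) {n m k : ℕ} (s : ℝ) (hmn : m ≤ n) (hk : k < 2 ^ m)
    (hodd : k % 2 = 1) (i j : Fin d) :
    ∫ x in dyad m k, Wns W Atil n s x i j = (∫ x in dyad m k, W x i j) +
      s * ∑ p ∈ (DplusLe n).filter (fun p => dyad p.1 p.2 ⊆ dyad m k), Atil p i j := by
  have hfin := volume_dyad_ne_top m k
  have hbump : ∀ p ∈ DplusLe n, IntegrableOn (fun x => (SIdx n p).indicator
      (fun _ => (volume (SIdx n p)).toReal⁻¹ * Atil p i j) x) (dyad m k) :=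
    fun p _ => (integrableOn_const hfin).indicator (measurableSet_dyad _ _)
  simp_rw [Wns_apply]
  rw [integral_add (integrableOn_Wmart_apply hfin n i j)
      ((integrable_finsetSum _ hbump).const_mul s), integral_const_mul,
    integral_finsetSum _ hbump, setIntegral_Wmart_apply hW hmn hk, Finset.sum_filter,
    Finset.sum_congr rfl fun p hp => setIntegral_indicator_SIdx (mem_DplusLe.1 hp).1.2 hmn hodd _]

lemma avgMat_Wns {W : ℝ → Mat d} (hW : ∀ i j, IntegrableOn (fun x => W x i j) I0)
    (Atil : ℕ × ℕ → Mat d) {n m k : ℕ} (s : ℝ) (hmn : m ≤ n) (hk : k < 2 ^ m)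
    (hodd : k % 2 = 1) :
    avgMat (dyad m k) (Wns W Atil n s) = avgMat (dyad m k) W +
      (s * (volume (dyad m k)).toReal⁻¹) •
        ∑ p ∈ (DplusLe n).filter (fun p => dyad p.1 p.2 ⊆ dyad m k), Atil p := by
  ext i j
  simp only [avgMat, avgOn, Matrix.of_apply, Matrix.add_apply, Matrix.smul_apply,
    Matrix.sum_apply, smul_eq_mul, setIntegral_Wns_apply hW Atil s hmn hk hodd]
  ring

lemma dotp_mulVec (M : Mat d) (e : Fin d → ℝ) : dotp (M *ᵥ e) e = e ⬝ᵥ (M *ᵥ e) :=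
  dotProduct_comm _ _

lemma setIntegral_dotProduct_mulVec {W : ℝ → Mat d} {I : Set ℝ}
    (hW : ∀ i j, IntegrableOn (fun x => W x i j) I) (e : Fin d → ℝ) :
    ∫ x in I, e ⬝ᵥ (W x *ᵥ e) = ∑ i, ∑ j, e i * ((∫ x in I, W x i j) * e j) := by
  simp only [dotProduct, Matrix.mulVec, Finset.mul_sum]
  rw [integral_finsetSum _ fun i _ => integrable_finsetSum _ fun j _ =>
    ((hW i j).mul_const _).const_mul _]
  refine Finset.sum_congr rfl fun i _ => ?_
  rw [integral_finsetSum _ fun j _ => ((hW i j).mul_const _).const_mul _]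
  refine Finset.sum_congr rfl fun j _ => ?_
  rw [integral_const_mul, integral_mul_const]

lemma dotProduct_avgMat_mulVec {W : ℝ → Mat d} {I : Set ℝ}
    (hW : ∀ i j, IntegrableOn (fun x => W x i j) I) (e : Fin d → ℝ) :
    e ⬝ᵥ (avgMat I W *ᵥ e) = (volume I).toReal⁻¹ * ∫ x in I, e ⬝ᵥ (W x *ᵥ e) := by
  rw [setIntegral_dotProduct_mulVec hW]
  simp only [dotProduct, Matrix.mulVec, avgMat, avgOn, Matrix.of_apply, smul_eq_mul,
    Finset.mul_sum]
  refine Finset.sum_congr rfl fun i _ => Finset.sum_congr rfl fun j _ => ?_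
  ring

lemma avgMat_isHermitian {W : ℝ → Mat d} (hW : ∀ x, (W x).IsSymm) (I : Set ℝ) :
    (avgMat I W).IsHermitian := by
  rw [Matrix.isHermitian_iff_isSymm]
  ext i j
  simp only [Matrix.transpose_apply, avgMat, Matrix.of_apply, fun x => (hW x).apply i j]

lemma avgMat_posSemidef {W : ℝ → Mat d} (hW : IsMatrixWeight d W) {I : Set ℝ} (hI : I ⊆ I0) :
    (avgMat I W).PosSemidef := by
  refine .of_dotProduct_mulVec_nonneg (avgMat_isHermitian hW.symm I) fun e => ?_
  rw [star_trivial, dotProduct_avgMat_mulVec fun i j => (hW.intOn i j).mono_set hI]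
  refine mul_nonneg (by positivity) (integral_nonneg_of_ae ?_)
  filter_upwards [ae_restrict_of_ae_restrict_of_subset hI hW.posdef] with x hx
  simpa using hx.posSemidef.dotProduct_mulVec_nonneg e

lemma sum_le_of_tsum_ite_ofReal_le {ι : Type*} {P : ι → Prop} [DecidablePred P] {a : ι → ℝ}
    {b : ℝ} (ha : ∀ i, P i → 0 ≤ a i) (hb : 0 ≤ b)
    (h : ∑' i, (if P i then ENNReal.ofReal (a i) else 0) ≤ ENNReal.ofReal b)
    {F : Finset ι} (hF : ∀ i ∈ F, P i) : ∑ i ∈ F, a i ≤ b := by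
  rw [← ENNReal.ofReal_le_ofReal_iff hb, ENNReal.ofReal_sum_of_nonneg fun i hi => ha i (hF i hi)]
  calc ∑ i ∈ F, ENNReal.ofReal (a i)
      = ∑ i ∈ F, (if P i then ENNReal.ofReal (a i) else 0) :=
        Finset.sum_congr rfl fun i hi => (if_pos (hF i hi)).symm
    _ ≤ ∑' i, (if P i then ENNReal.ofReal (a i) else 0) := ENNReal.sum_le_tsum F
    _ ≤ ENNReal.ofReal b := h

lemma matLE_of_dotProduct_mulVec_le {A B : Mat d} (hA : A.IsHermitian) (hB : B.IsHermitian)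
    (h : ∀ e, e ⬝ᵥ (A *ᵥ e) ≤ e ⬝ᵥ (B *ᵥ e)) : matLE A B :=
  .of_dotProduct_mulVec_nonneg (hB.sub hA) fun e => by
    rw [star_trivial, Matrix.sub_mulVec, dotProduct_sub]
    exact sub_nonneg.2 (h e)

lemma matLE_add_smul_of_matLE {A B : Mat d} {s : ℝ} (hs : 0 ≤ s) (h : matLE B A) :
    matLE (A + s • B) ((1 + s) • A) := by
  rw [matLE, show (1 + s) • A - (A + s • B) = s • (A - B) by module]
  exact h.smul hs

lemma matLE_inv_smul_sum_of_carleson {ι : Type*} {P : ι → Prop} [DecidablePred P]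
    {A : Mat d} (hA : A.PosSemidef) {B : ι → Mat d} (hB : ∀ i, P i → (B i).PosSemidef)
    {c : ℝ} (hc : 0 < c)
    (hcarl : ∀ e, ∑' i, (if P i then ENNReal.ofReal (dotp (B i *ᵥ e) e) else 0) ≤
      ENNReal.ofReal (c * dotp (A *ᵥ e) e))
    {F : Finset ι} (hF : ∀ i ∈ F, P i) : matLE (c⁻¹ • ∑ i ∈ F, B i) A := by
  have hsum : (∑ i ∈ F, B i).PosSemidef := Matrix.posSemidef_sum F fun i hi => hB i (hF i hi)
  refine matLE_of_dotProduct_mulVec_le (hsum.smul (inv_nonneg.2 hc.le)).isHermitian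
    hA.isHermitian fun e => ?_
  rw [Matrix.smul_mulVec, dotProduct_smul, smul_eq_mul, Matrix.sum_mulVec, dotProduct_sum,
    inv_mul_le_iff₀ hc]
  simp only [dotp_mulVec] at hcarl
  refine sum_le_of_tsum_ite_ofReal_le (fun i hi => ?_) ?_ (hcarl e) hF
  · simpa using (hB i hi).dotProduct_mulVec_nonneg e
  · simpa using mul_nonneg hc.le (hA.dotProduct_mulVec_nonneg e)

end MatrixWeight

theorem perturbed_weight_average_general {d : ℕ} (W : ℝ → Mat d) (hW : IsMatrixWeight d W)
    (Atil : ℕ × ℕ → Mat d)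
    (hpsd : ∀ p : ℕ × ℕ, p.2 < 2 ^ p.1 → (Atil p).PosSemidef)
    (hcarl : ∀ n k : ℕ, k < 2 ^ n → ∀ e : Fin d → ℝ,
      (∑' q : ℕ × ℕ,
          if q.2 < 2 ^ q.1 ∧ dyad q.1 q.2 ⊆ dyad n k then
            ENNReal.ofReal (dotp (Atil q *ᵥ e) e)
          else 0) ≤
        ENNReal.ofReal
          ((volume (dyad n k)).toReal * dotp (avgMat (dyad n k) W *ᵥ e) e))
    (n : ℕ) (s : ℝ) (hs : 0 ≤ s)
    (m k : ℕ) (hmn : m ≤ n) (hk : k < 2 ^ m) (hodd : k % 2 = 1) :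
    avgMat (dyad m k) (Wns W Atil n s) =
      avgMat (dyad m k) W +
        (s * ((volume (dyad m k)).toReal)⁻¹) •
          ∑ p ∈ (DplusLe n).filter (fun p => dyad p.1 p.2 ⊆ dyad m k), Atil p ∧
    matLE (avgMat (dyad m k) (Wns W Atil n s)) ((1 + s) • avgMat (dyad m k) W) := by
  set F := (DplusLe n).filter (fun p => dyad p.1 p.2 ⊆ dyad m k)
  have hF : ∀ p ∈ F, p.2 < 2 ^ p.1 ∧ dyad p.1 p.2 ⊆ dyad m k := fun p hp =>
    ⟨(mem_DplusLe.1 (Finset.mem_filter.1 hp).1).2.2.1, (Finset.mem_filter.1 hp).2⟩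
  have hc : 0 < (volume (dyad m k)).toReal := by rw [volume_dyad_toReal]; positivity
  have hle := matLE_inv_smul_sum_of_carleson (avgMat_posSemidef hW (dyad_subset_I0 hk))
    (fun q hq => hpsd q hq.1) hc (hcarl m k hk) hF
  refine ⟨avgMat_Wns hW.intOn Atil s hmn hk hodd, ?_⟩
  rw [avgMat_Wns hW.intOn Atil s hmn hk hodd, mul_smul]
  exact matLE_add_smul_of_matLE hs hle

/-- If `(Ã_J)_{J∈𝒟}` are positive semidefinite and satisfy the Carleson condition
`(1/|I|) Σ_{J∈𝒟(I)} Ã_J ≤ ⟨W⟩_I` for all `I ∈ 𝒟`, then for every `I ∈ 𝒟₊^{≤n}` and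
`s ≥ 0`, `⟨W_{n,s}⟩_I = ⟨W⟩_I + (s/|I|) Σ_{J∈𝒟₊^{≤n}, J⊆I} Ã_J ≤ (1+s) ⟨W⟩_I`
in the sense of quadratic forms. -/
theorem perturbed_weight_average {d : ℕ} (W : ℝ → Mat d) (hW : IsMatrixWeight d W)
    (Atil : ℕ × ℕ → Mat d)
    (hpsd : ∀ p : ℕ × ℕ, p.2 < 2 ^ p.1 → (Atil p).PosSemidef)
    (hcarl : ∀ n k : ℕ, k < 2 ^ n → ∀ e : Fin d → ℝ,
      (∑' q : ℕ × ℕ,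
          if q.2 < 2 ^ q.1 ∧ dyad q.1 q.2 ⊆ dyad n k then
            ENNReal.ofReal (dotp (Atil q *ᵥ e) e)
          else 0) ≤
        ENNReal.ofReal
          ((volume (dyad n k)).toReal * dotp (avgMat (dyad n k) W *ᵥ e) e))
    (n : ℕ) (s : ℝ) (hs : 0 ≤ s)
    (m k : ℕ) (hm1 : 1 ≤ m) (hmn : m ≤ n) (hk : k < 2 ^ m) (hodd : k % 2 = 1) :
    avgMat (dyad m k) (Wns W Atil n s) =
      avgMat (dyad m k) W +
        (s * ((volume (dyad m k)).toReal)⁻¹) •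
          ∑ p ∈ (DplusLe n).filter (fun p => dyad p.1 p.2 ⊆ dyad m k), Atil p ∧
    matLE (avgMat (dyad m k) (Wns W Atil n s)) ((1 + s) • avgMat (dyad m k) W) :=
  perturbed_weight_average_general W hW Atil hpsd hcarl n s hs m k hmn hk hodd
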